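/- In a weak brace S, the map ρ : S → T_S, b ↦ ρ_b, with ρ_b(a) = (a⁻+b)⁻∘b, is an anti-homomorphism from (S,∘) into the full transformation monoid on S; that is, ρ_{b∘c} = ρ_c ∘ ρ_b for all b, c ∈ S. -/

import Mathlib

/-- A weak (left) brace: `(S,+)` and `(S,∘)` are inverse semigroups (with designated
inverse maps `neg` and `inv`), satisfying `a∘(b+c) = a∘b - a + a∘c` and `a∘a⁻ = -a + a`. -/
structure WeakBrace (S : Type*) where
  add : S → S → S
  mul : S → S → S
  neg : S → S
  inv : S → S
  add_assoc : ∀ a b c : S, add (add a b) c = add a (add b c)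
  mul_assoc : ∀ a b c : S, mul (mul a b) c = mul a (mul b c)
  add_neg_add : ∀ a : S, add (add a (neg a)) a = a
  neg_add_neg : ∀ a : S, add (add (neg a) a) (neg a) = neg a
  neg_unique : ∀ a x : S, add (add a x) a = a → add (add x a) x = x → x = neg a
  mul_inv_mul : ∀ a : S, mul (mul a (inv a)) a = a
  inv_mul_inv : ∀ a : S, mul (mul (inv a) a) (inv a) = inv a
  inv_unique : ∀ a x : S, mul (mul a x) a = a → mul (mul x a) x = x → x = inv a
  distrib : ∀ a b c : S, mul a (add b c) = add (add (mul a b) (neg a)) (mul a c)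
  mul_inv_eq : ∀ a : S, mul a (inv a) = add (neg a) a

/-!
Both `(S, +)` and `(S, ∘)` are inverse semigroups, so in each of them idempotents commute and
inversion reverses products. In a weak brace the two semigroups have the same idempotents,
`(S, +)` is a Clifford semigroup (`a - a = -a + a`), hence its idempotents are central, and an
idempotent `e` acts by `e ∘ c = c + e`. For the idempotent `b⁻ ∘ b = -b⁻ + b⁻` this yields
`b⁻ ∘ (x + b ∘ c) = b⁻ ∘ (x + b) + c`. Taking `x = a⁻` and using `ρ_b(a)⁻ = b⁻ ∘ (a⁻ + b)`,
`ρ_c(ρ_b(a)) = (b⁻ ∘ (a⁻ + b ∘ c))⁻ ∘ c = (a⁻ + b ∘ c)⁻ ∘ b ∘ c = ρ_{b ∘ c}(a)`.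
-/

structure IsInverseSemigroup {S : Type*} (op : S → S → S) (inv : S → S) : Prop where
  assoc : ∀ a b c : S, op (op a b) c = op a (op b c)
  op_inv_op : ∀ a : S, op (op a (inv a)) a = a
  inv_op_inv : ∀ a : S, op (op (inv a) a) (inv a) = inv a
  inv_unique : ∀ a x : S, op (op a x) a = a → op (op x a) x = x → x = inv a

namespace IsInverseSemigroup

variable {S : Type*} {op : S → S → S} {inv : S → S}

local infixl:70 " ⋆ " => op
local postfix:max "ˉ" => inv

theorem op_op_inv_op (h : IsInverseSemigroup op inv) (a : S) : a ⋆ (aˉ ⋆ a) = a := by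
  rw [← h.assoc, h.op_inv_op]

theorem inv_op_op_inv (h : IsInverseSemigroup op inv) (a : S) : aˉ ⋆ (a ⋆ aˉ) = aˉ := by
  rw [← h.assoc, h.inv_op_inv]

theorem op_inv_op_op (h : IsInverseSemigroup op inv) (a z : S) : a ⋆ (aˉ ⋆ (a ⋆ z)) = a ⋆ z := by
  rw [← h.assoc, ← h.assoc, h.op_inv_op]

theorem inv_op_inv_op (h : IsInverseSemigroup op inv) (a z : S) :
    aˉ ⋆ (a ⋆ (aˉ ⋆ z)) = aˉ ⋆ z := by
  rw [← h.assoc, ← h.assoc, h.inv_op_inv]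

theorem inv_inv (h : IsInverseSemigroup op inv) (a : S) : aˉˉ = a :=
  (h.inv_unique aˉ a (h.inv_op_inv a) (h.op_inv_op a)).symm

theorem inv_eq_self_of_idem (h : IsInverseSemigroup op inv) {e : S} (he : e ⋆ e = e) :
    eˉ = e :=
  (h.inv_unique e e (by rw [he, he]) (by rw [he, he])).symm

theorem op_op_of_idem (h : IsInverseSemigroup op inv) {e : S} (he : e ⋆ e = e) (z : S) :
    e ⋆ (e ⋆ z) = e ⋆ z := by
  rw [← h.assoc, he]

theorem op_inv_idem (h : IsInverseSemigroup op inv) (a : S) : a ⋆ aˉ ⋆ (a ⋆ aˉ) = a ⋆ aˉ := by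
  rw [h.assoc, h.inv_op_op_inv]

theorem inv_op_idem (h : IsInverseSemigroup op inv) (a : S) : aˉ ⋆ a ⋆ (aˉ ⋆ a) = aˉ ⋆ a := by
  rw [h.assoc, h.op_op_inv_op]

theorem idem_op_idem (h : IsInverseSemigroup op inv) {e f : S} (he : e ⋆ e = e)
    (hf : f ⋆ f = f) : e ⋆ f ⋆ (e ⋆ f) = e ⋆ f := by
  set x := (e ⋆ f)ˉ with hx
  have hefx : e ⋆ (f ⋆ (x ⋆ (e ⋆ f))) = e ⋆ f := by
    simpa only [h.assoc] using h.op_inv_op (e ⋆ f)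
  have hxef : ∀ z, x ⋆ (e ⋆ (f ⋆ (x ⋆ z))) = x ⋆ z := fun z => by
    simpa only [h.assoc] using congrArg (· ⋆ z) (h.inv_op_inv (e ⋆ f))
  -- `f ⋆ x ⋆ e` is also an inverse of `e ⋆ f`
  have hfxe : f ⋆ x ⋆ e = x := by
    refine h.inv_unique (e ⋆ f) _ ?_ ?_
    · simp only [h.assoc, h.op_op_of_idem he, h.op_op_of_idem hf, hefx]
    · simp only [h.assoc, h.op_op_of_idem he, h.op_op_of_idem hf, hxef]
  have hxx : x ⋆ x = x := by
    conv_lhs => rw [← hfxe]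
    simp only [h.assoc, hxef]
    rw [← h.assoc, hfxe]
  rw [← h.inv_inv (e ⋆ f), ← hx, h.inv_eq_self_of_idem hxx, hxx]

theorem idem_comm (h : IsInverseSemigroup op inv) {e f : S} (he : e ⋆ e = e)
    (hf : f ⋆ f = f) : f ⋆ e = e ⋆ f := by
  have hef := h.idem_op_idem he hf
  have hfe := h.idem_op_idem hf he
  have hinv : f ⋆ e = (e ⋆ f)ˉ := by
    refine h.inv_unique (e ⋆ f) _ ?_ ?_
    · simp only [h.assoc, h.op_op_of_idem he, h.op_op_of_idem hf] at hef ⊢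
      exact hef
    · simp only [h.assoc, h.op_op_of_idem he, h.op_op_of_idem hf] at hfe ⊢
      exact hfe
  rw [hinv, h.inv_eq_self_of_idem hef]

theorem inv_op (h : IsInverseSemigroup op inv) (a b : S) : (a ⋆ b)ˉ = bˉ ⋆ aˉ := by
  have hcomm : ∀ z, b ⋆ (bˉ ⋆ (aˉ ⋆ (a ⋆ z))) = aˉ ⋆ (a ⋆ (b ⋆ (bˉ ⋆ z))) := fun z => by
    simpa only [h.assoc] using
      congrArg (· ⋆ z) (h.idem_comm (h.inv_op_idem a) (h.op_inv_idem b))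
  refine (h.inv_unique (a ⋆ b) _ ?_ ?_).symm
  · simp only [h.assoc, hcomm, h.op_inv_op_op, h.op_op_inv_op]
  · simp only [h.assoc, ← hcomm, h.inv_op_inv_op, h.inv_op_op_inv]

theorem conj_idem (h : IsInverseSemigroup op inv) {e : S} (he : e ⋆ e = e) (y : S) :
    y ⋆ (e ⋆ yˉ) ⋆ (y ⋆ (e ⋆ yˉ)) = y ⋆ (e ⋆ yˉ) := by
  have hcomm : e ⋆ (yˉ ⋆ (y ⋆ (e ⋆ yˉ))) = yˉ ⋆ (y ⋆ (e ⋆ yˉ)) := by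
    simpa only [h.assoc, h.op_op_of_idem he] using
      congrArg (· ⋆ (e ⋆ yˉ)) (h.idem_comm he (h.inv_op_idem y)).symm
  simp only [h.assoc, hcomm, h.op_inv_op_op]

theorem idem_op_comm_of_clifford (h : IsInverseSemigroup op inv) (hc : ∀ a, a ⋆ aˉ = aˉ ⋆ a)
    {e : S} (he : e ⋆ e = e) (a : S) : e ⋆ a = a ⋆ e := by
  have hconj : a ⋆ e ⋆ aˉ = e ⋆ (a ⋆ aˉ) := by
    have hae := hc (a ⋆ e)
    rw [h.inv_op, h.inv_eq_self_of_idem he] at hae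
    calc a ⋆ e ⋆ aˉ = a ⋆ e ⋆ (e ⋆ aˉ) := by rw [← h.assoc, h.assoc a e e, he]
      _ = e ⋆ (aˉ ⋆ a ⋆ e) := by rw [hae]; simp only [h.assoc]
      _ = e ⋆ (a ⋆ aˉ) := by
        rw [h.idem_comm he (h.inv_op_idem a), h.op_op_of_idem he, hc]
  calc e ⋆ a = e ⋆ (a ⋆ aˉ) ⋆ a := by rw [h.assoc, h.op_inv_op]
    _ = a ⋆ (e ⋆ (aˉ ⋆ a)) := by rw [← hconj]; simp only [h.assoc]
    _ = a ⋆ e := by rw [← h.idem_comm he (h.inv_op_idem a), ← h.assoc, h.op_op_inv_op]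

end IsInverseSemigroup

namespace WeakBrace

variable {S : Type*} (W : WeakBrace S)

local infixl:65 " +' " => W.add
local infixl:70 " ⊚ " => W.mul
local prefix:max "-'" => W.neg
local postfix:max "ˉ" => W.inv

theorem isInverseSemigroup_add : IsInverseSemigroup W.add W.neg :=
  ⟨W.add_assoc, W.add_neg_add, W.neg_add_neg, W.neg_unique⟩

theorem isInverseSemigroup_mul : IsInverseSemigroup W.mul W.inv :=
  ⟨W.mul_assoc, W.mul_inv_mul, W.inv_mul_inv, W.inv_unique⟩

theorem neg_mul (a c : S) : -'(a ⊚ c) = -'a +' (a ⊚ -'c +' -'a) := by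
  refine (W.neg_unique (a ⊚ c) _ ?_ ?_).symm
  · have h : a ⊚ (c +' -'c +' c) = a ⊚ c := by rw [W.add_neg_add c]
    rw [W.distrib a (c +' -'c) c, W.distrib a c (-'c)] at h
    simpa only [W.add_assoc] using h
  · have h : -'a +' (a ⊚ (-'c +' c +' -'c) +' -'a) = -'a +' (a ⊚ -'c +' -'a) := by
      rw [W.neg_add_neg c]
    rw [W.distrib a (-'c +' c) (-'c), W.distrib a (-'c) c] at h
    simpa only [W.add_assoc] using h

theorem add_neg_add_mul_add_neg_add (a c : S) : a +' -'a +' a ⊚ c +' (-'a +' a) = a ⊚ c := by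
  have hA := W.isInverseSemigroup_add
  conv_rhs => rw [← hA.inv_inv (a ⊚ c)]
  rw [W.neg_mul, hA.inv_op, hA.inv_op, W.neg_mul, hA.inv_inv, hA.inv_inv]
  simp only [W.add_assoc]

theorem add_neg_add_mul (a c : S) : a +' -'a +' a ⊚ c = a ⊚ c := by
  have hA := W.isInverseSemigroup_add
  conv_lhs => rw [← W.add_neg_add_mul_add_neg_add]
  simpa only [W.add_assoc, hA.op_inv_op_op] using W.add_neg_add_mul_add_neg_add a c

theorem mul_add_neg_add (a c : S) : a ⊚ c +' (-'a +' a) = a ⊚ c := by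
  have hA := W.isInverseSemigroup_add
  conv_lhs => rw [← W.add_neg_add_mul_add_neg_add]
  simpa only [W.add_assoc, hA.op_op_inv_op] using W.add_neg_add_mul_add_neg_add a c

theorem add_neg_comm (a : S) : a +' -'a = -'a +' a := by
  have hA := W.isInverseSemigroup_add
  have h (x : S) : x +' -'x +' (-'x +' x) = -'x +' x := by
    simpa only [W.mul_inv_eq, W.add_assoc] using W.add_neg_add_mul x xˉ
  calc a +' -'a = -'a +' a +' (a +' -'a) := by simpa only [hA.inv_inv] using (h (-'a)).symm
    _ = a +' -'a +' (-'a +' a) := hA.idem_comm (hA.op_inv_idem a) (hA.inv_op_idem a)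
    _ = -'a +' a := h a

theorem idem_add_comm {e : S} (he : e +' e = e) (a : S) : e +' a = a +' e :=
  W.isInverseSemigroup_add.idem_op_comm_of_clifford W.add_neg_comm he a

theorem add_idem_of_mul_idem {e : S} (he : e ⊚ e = e) : e +' e = e := by
  have h : e = -'e +' e := by
    simpa only [W.isInverseSemigroup_mul.inv_eq_self_of_idem he, he] using W.mul_inv_eq e
  rw [h]
  exact W.isInverseSemigroup_add.inv_op_idem e

theorem mul_idem_of_add_idem {e : S} (he : e +' e = e) : e ⊚ e = e := by
  simpa only [W.mul_inv_eq, W.isInverseSemigroup_add.inv_eq_self_of_idem he, he]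
    using W.mul_inv_mul e

theorem neg_eq_self_of_mul_idem {e : S} (he : e ⊚ e = e) : -'e = e :=
  W.isInverseSemigroup_add.inv_eq_self_of_idem (W.add_idem_of_mul_idem he)

theorem idem_add_idem_mul {e : S} (he : e ⊚ e = e) (c : S) : e +' e ⊚ c = e ⊚ c := by
  simpa only [W.neg_eq_self_of_mul_idem he, W.add_idem_of_mul_idem he]
    using W.add_neg_add_mul e c

theorem idem_mul_add_idem {e : S} (he : e ⊚ e = e) (c : S) : e ⊚ c +' e = e ⊚ c := by
  simpa only [W.neg_eq_self_of_mul_idem he, W.add_idem_of_mul_idem he]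
    using W.mul_add_neg_add e c

theorem mul_idem_mul_inv {e : S} (he : e ⊚ e = e) (y : S) : y ⊚ (e ⊚ yˉ) = -'y +' y ⊚ e := by
  have hM := W.isInverseSemigroup_mul
  have h := W.mul_inv_eq (y ⊚ e)
  rw [hM.inv_op, hM.inv_eq_self_of_idem he, W.mul_assoc, ← W.mul_assoc e, he, W.neg_mul,
    W.neg_eq_self_of_mul_idem he, W.add_assoc, W.add_assoc, ← W.add_assoc (y ⊚ e), ← W.distrib,
    W.add_idem_of_mul_idem he] at h
  exact h

theorem idem_mul_eq_add_mul_inv_mul {e : S} (he : e ⊚ e = e) (c : S) :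
    e ⊚ c = c +' c ⊚ cˉ ⊚ e := by
  have hM := W.isInverseSemigroup_mul
  set k := cˉ ⊚ (e ⊚ c)
  have hk : k ⊚ k = k := by simpa only [hM.inv_inv] using hM.conj_idem he cˉ
  have hck : c ⊚ k = e ⊚ c := by
    rw [← W.mul_assoc, ← W.mul_assoc, hM.idem_comm he (hM.op_inv_idem c), W.mul_assoc,
      hM.op_inv_op]
  calc e ⊚ c = c ⊚ k := hck.symm
    _ = c +' (-'c +' c ⊚ k) := by rw [← W.add_assoc, W.add_neg_add_mul]
    _ = c +' c ⊚ cˉ ⊚ e := by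
      rw [← W.mul_idem_mul_inv hk, ← W.mul_assoc, hck, W.mul_assoc,
        ← hM.idem_comm he (hM.op_inv_idem c)]

theorem idem_mul_idem {e f : S} (he : e ⊚ e = e) (hf : f ⊚ f = f) : e ⊚ f = e +' f := by
  have hA := W.isInverseSemigroup_add
  have hM := W.isInverseSemigroup_mul
  set g := e +' f
  have hga : g +' g = g := hA.idem_op_idem (W.add_idem_of_mul_idem he) (W.add_idem_of_mul_idem hf)
  have hgm : g ⊚ g = g := W.mul_idem_of_add_idem hga
  have hge : g ⊚ e = e ⊚ f := by
    rw [hM.idem_comm he hgm, W.distrib, he, W.neg_eq_self_of_mul_idem he,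
      W.add_idem_of_mul_idem he, W.idem_add_idem_mul he]
  have hgf : g ⊚ f = e ⊚ f := by
    rw [hM.idem_comm hf hgm, W.distrib, hf, W.neg_eq_self_of_mul_idem hf, W.add_assoc,
      W.add_idem_of_mul_idem hf, W.idem_mul_add_idem hf, hM.idem_comm he hf]
  have hef : e ⊚ f +' e ⊚ f = e ⊚ f := W.add_idem_of_mul_idem (hM.idem_op_idem he hf)
  -- `e ⊚ f ≤ g` and `g ≤ e ⊚ f` in the natural order on idempotents
  have hef_le : e ⊚ f = g +' e ⊚ f :=
    calc e ⊚ f = e ⊚ g := by rw [← hM.idem_comm he hgm, hge]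
      _ = g +' g ⊚ gˉ ⊚ e := W.idem_mul_eq_add_mul_inv_mul he g
      _ = g +' e ⊚ f := by rw [hM.inv_eq_self_of_idem hgm, hgm, hge]
  have hg_le : g = g +' e ⊚ f := by
    conv_lhs => rw [← hgm]
    rw [W.distrib, hge, hgf, hA.inv_eq_self_of_idem hga, ← W.idem_add_comm hga (e ⊚ f),
      W.add_assoc, hef]
  rw [hef_le, ← hg_le]

theorem idem_mul_eq_add {e : S} (he : e ⊚ e = e) (c : S) : e ⊚ c = c +' e := by
  rw [W.idem_mul_eq_add_mul_inv_mul he,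
    W.idem_mul_idem (W.isInverseSemigroup_mul.op_inv_idem c) he, W.mul_inv_eq,
    ← W.add_assoc, ← W.add_assoc, W.add_neg_add]

theorem inv_mul_add_mul (x b c : S) : bˉ ⊚ (x +' b ⊚ c) = bˉ ⊚ (x +' b) +' c := by
  have hM := W.isInverseSemigroup_mul
  have hb : bˉ ⊚ b = -'bˉ +' bˉ := by simpa only [hM.inv_inv] using W.mul_inv_eq bˉ
  rw [W.distrib, ← W.mul_assoc, W.idem_mul_eq_add (hM.inv_op_idem b), hb,
    ← W.idem_add_comm (W.isInverseSemigroup_add.inv_op_idem bˉ), W.distrib, hb]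
  simp only [W.add_assoc]

/-- `W.rho b a` is `ρ_b(a)`. -/
def rho (b a : S) : S := (aˉ +' b)ˉ ⊚ b

theorem rho_mul (b c a : S) : W.rho (b ⊚ c) a = W.rho c (W.rho b a) := by
  have hM := W.isInverseSemigroup_mul
  rw [rho, rho, rho, hM.inv_op, hM.inv_inv, ← W.inv_mul_add_mul, hM.inv_op, hM.inv_inv, W.mul_assoc]

end WeakBrace

theorem weakBrace_rho_antihom {S : Type*} (W : WeakBrace S) :
    ∀ a b c : S, W.mul (W.inv (W.add (W.inv a) (W.mul b c))) (W.mul b c)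
      = W.mul (W.inv (W.add (W.inv (W.mul (W.inv (W.add (W.inv a) b)) b)) c)) c :=
  fun a b c => W.rho_mul b c a
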